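/- Let x₀ ∈ ℝ^n and let {x_k} be the sketch-and-project iterates with arbitrary sketching matrices {S_k}. On the event ∩_{ℓ=1}^L {τ_ℓ < ∞}, there exist γ_ℓ ∈ (0,1) for ℓ = 1,…,L, where each γ_ℓ is a measurable function of (Q_{τ_{ℓ−1}+1},…,Q_{τ_ℓ}), such that ‖x_{τ_L} − x*‖_B ≤ (∏_{ℓ=1}^L γ_ℓ) ‖x₀ − x*‖_B. -/

import Mathlib

open MeasureTheory ProbabilityTheory Matrix Finset Filter

noncomputable section

/-- The Moore–Penrose pseudoinverse of a real matrix, defined via classical choice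
as a matrix satisfying the four Penrose equations (such a matrix exists and is unique). -/
noncomputable def mpinv {a b : ℕ} (M : Matrix (Fin a) (Fin b) ℝ) : Matrix (Fin b) (Fin a) ℝ :=
  Classical.epsilon fun X => M * X * M = M ∧ X * M * X = X ∧ (M * X)ᵀ = M * X ∧ (X * M)ᵀ = X * M

/-- The Euclidean norm of a vector in `Fin a → ℝ`. -/
noncomputable def nrm2 {a : ℕ} (v : Fin a → ℝ) : ℝ := Real.sqrt (∑ i, v i ^ 2)

/-- The spectral norm (ℓ₂ operator norm) of a matrix. -/
noncomputable def specNorm {a b : ℕ} (M : Matrix (Fin a) (Fin b) ℝ) : ℝ :=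
  sInf {c | 0 ≤ c ∧ ∀ v, nrm2 (M *ᵥ v) ≤ c * nrm2 v}

/-- The row space of a matrix, as a submodule of `Fin b → ℝ`. -/
def rowSpace {a b : ℕ} (M : Matrix (Fin a) (Fin b) ℝ) : Submodule ℝ (Fin b → ℝ) :=
  Submodule.span ℝ (Set.range M)

/-- The column space of a matrix, as a submodule of `Fin a → ℝ`. -/
def colSpace {a b : ℕ} (M : Matrix (Fin a) (Fin b) ℝ) : Submodule ℝ (Fin a → ℝ) :=
  rowSpace Mᵀ

/-- One step of the sketch-and-project iteration:
`x ↦ x − B⁻¹Aᵀ Sₖ (Sₖᵀ A B⁻¹ Aᵀ Sₖ)† Sₖᵀ (A x − b)`. -/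
noncomputable def spStep {m n p : ℕ} (A : Matrix (Fin m) (Fin n) ℝ)
    (B : Matrix (Fin n) (Fin n) ℝ) (b : Fin m → ℝ)
    (Sk : Matrix (Fin m) (Fin p) ℝ) (xk : Fin n → ℝ) : Fin n → ℝ :=
  xk - (B⁻¹ * Aᵀ * Sk * mpinv (Skᵀ * A * B⁻¹ * Aᵀ * Sk) * Skᵀ) *ᵥ (A *ᵥ xk - b)

instance matrixMeasurableSpace {a b : ℕ} : MeasurableSpace (Matrix (Fin a) (Fin b) ℝ) :=
  MeasurableSpace.pi

/-- The `(C, ω)` sub-exponential Johnson–Lindenstrauss property of a random `m × p` matrix. -/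
def jlProperty {m p : ℕ} {Ω : Type*} [MeasurableSpace Ω] (μ : Measure Ω)
    (S : Ω → Matrix (Fin m) (Fin p) ℝ) (C ω : ℝ) : Prop :=
  0 < C ∧ 0 < ω ∧ ∀ z : Fin m → ℝ,
    (∀ t : ℝ, |t| ≤ 1 / ω →
      ∫ a, Real.exp (t * (nrm2 ((S a)ᵀ *ᵥ z) ^ 2 - nrm2 z ^ 2)) ∂μ ≤
        Real.exp (t ^ 2 * nrm2 z ^ 4 / (2 * C * p))) ∧
    (∀ δ : ℝ, 0 < δ →
      μ {a | δ * nrm2 z ^ 2 < |nrm2 ((S a)ᵀ *ᵥ z) ^ 2 - nrm2 z ^ 2|} ≤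
        ENNReal.ofReal (2 * Real.exp (-min (C * p * δ ^ 2) (C * p * δ / ω))))

/-- `σ`-algebra generated by the sketching matrices `S₁, …, S_j`. -/
def sigmaF {m p : ℕ} {Ω : Type*} [MeasurableSpace Ω]
    (S : ℕ → Ω → Matrix (Fin m) (Fin p) ℝ) (j : ℕ) : MeasurableSpace Ω :=
  ⨆ i ∈ Finset.Icc 1 j, MeasurableSpace.comap (S i) inferInstance

/-- The smallest nonzero singular value of a matrix. -/
noncomputable def sigmaMinPos {a b : ℕ} (M : Matrix (Fin a) (Fin b) ℝ) : ℝ :=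
  sInf {c | ∃ v ∈ rowSpace M, v ≠ 0 ∧ c = nrm2 (M *ᵥ v) / nrm2 v}

/-!
In the coordinates `y_k = B^{1/2} (x_k - x⋆)` a sketch-and-project step replaces `y_k` by its
orthogonal projection onto the complement of `row(S_{k+1}ᵀ A B^{-1/2}) = col(Q_{k+1})`, so `‖y_k‖`
never increases. As `x⋆` is the `B`-projection of `x₀` onto the solution set, `y_0`, and with it
every `y_k`, lies in `row(A B^{-1/2})`. If `‖y‖` did not drop strictly over a covering cycle
`(τ_ℓ, τ_{ℓ+1}]`, every projection of the cycle would fix `y_{τ_ℓ}`, which would then be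
orthogonal to `col(Q_{τ_ℓ+1}) + ⋯ + col(Q_{τ_{ℓ+1}}) = row(A B^{-1/2}) ∋ y_{τ_ℓ}`, i.e. zero.
The ratios `‖y_{τ_ℓ}‖ / ‖y_{τ_{ℓ-1}}‖`, floored at `1 / 2`, serve as the factors `γ_ℓ`.
-/

theorem dotProduct_self_nonneg {ι R : Type*} [Fintype ι] [Ring R] [LinearOrder R]
    [IsStrictOrderedRing R] (v : ι → R) : 0 ≤ v ⬝ᵥ v :=
  Finset.sum_nonneg fun i _ => mul_self_nonneg (v i)

theorem dotProduct_eq_zero_of_forall_dotProduct_self_le {ι : Type*} [Fintype ι] {v w : ι → ℝ}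
    (h : ∀ t : ℝ, v ⬝ᵥ v ≤ (v - t • w) ⬝ᵥ (v - t • w)) : v ⬝ᵥ w = 0 := by
  have key : ∀ t : ℝ, 0 ≤ t * (t * (w ⬝ᵥ w) - 2 * (v ⬝ᵥ w)) := fun t => by
    have := h t
    simp only [sub_dotProduct, dotProduct_sub, smul_dotProduct, dotProduct_smul, smul_eq_mul,
      dotProduct_comm w v] at this
    linarith
  have hw := dotProduct_self_nonneg w
  set s := v ⬝ᵥ w / (w ⬝ᵥ w + 1)
  have hs : v ⬝ᵥ w = s * (w ⬝ᵥ w + 1) := (div_mul_cancel₀ _ (by positivity)).symm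
  have hs0 : s = 0 := by nlinarith [key s, sq_nonneg s]
  rw [hs, hs0, zero_mul]

theorem nrm2_eq_sqrt_dotProduct {n : ℕ} (v : Fin n → ℝ) : nrm2 v = √(v ⬝ᵥ v) := by
  simp [nrm2, dotProduct, sq]

theorem mem_rowSpace_iff {a b : ℕ} {M : Matrix (Fin a) (Fin b) ℝ} {v : Fin b → ℝ} :
    v ∈ rowSpace M ↔ ∃ u, u ᵥ* M = v := by
  change v ∈ Submodule.span ℝ (Set.range M.row) ↔ _
  rw [← range_vecMulLinear]
  rfl

theorem rowSpace_mul_le {a b c : ℕ} (N : Matrix (Fin a) (Fin b) ℝ)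
    (M : Matrix (Fin b) (Fin c) ℝ) : rowSpace (N * M) ≤ rowSpace M := by
  intro v hv
  obtain ⟨u, rfl⟩ := mem_rowSpace_iff.mp hv
  exact mem_rowSpace_iff.mpr ⟨u ᵥ* N, vecMul_vecMul u N M⟩

theorem dotProduct_eq_zero_of_mem_rowSpace {a b : ℕ} {M : Matrix (Fin a) (Fin b) ℝ}
    {v w : Fin b → ℝ} (hv : v ∈ rowSpace M) (hw : M *ᵥ w = 0) : v ⬝ᵥ w = 0 := by
  obtain ⟨u, rfl⟩ := mem_rowSpace_iff.mp hv
  rw [← dotProduct_mulVec, hw, dotProduct_zero]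

theorem mem_rowSpace_of_forall_dotProduct_eq_zero {a b : ℕ} {M : Matrix (Fin a) (Fin b) ℝ}
    {v : Fin b → ℝ} (h : ∀ w, M *ᵥ w = 0 → v ⬝ᵥ w = 0) : v ∈ rowSpace M := by
  set β : LinearMap.BilinForm ℝ (Fin b → ℝ) := dotProductBilin ℝ ℝ
  have hβ : β.Nondegenerate := ⟨fun u hu => dotProduct_self_eq_zero.mp (hu u),
    fun u hu => dotProduct_self_eq_zero.mp (hu u)⟩
  have hrefl : β.IsRefl := fun u w (huw : u ⬝ᵥ w = 0) => by
    change w ⬝ᵥ u = 0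
    rwa [dotProduct_comm]
  rw [← LinearMap.BilinForm.orthogonal_orthogonal hβ hrefl (rowSpace M)]
  intro w hw
  change w ⬝ᵥ v = 0
  rw [dotProduct_comm]
  exact h w (funext fun i => hw (M i) (Submodule.subset_span (Set.mem_range_self i)))

section MoorePenrose

variable {m n R : Type*} [Fintype m] [Fintype n]

def IsMoorePenroseInverse [CommRing R] (M : Matrix m n R) (X : Matrix n m R) : Prop :=
  M * X * M = M ∧ X * M * X = X ∧ (M * X)ᵀ = M * X ∧ (X * M)ᵀ = X * M

/-- Pseudo-inverting the eigenvalues works because `0⁻¹ = 0` in a field. -/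
theorem isMoorePenroseInverse_conj_diagonal [Field R] [DecidableEq n] {U : Matrix n n R}
    (hU : Uᵀ * U = 1) (d : n → R) :
    IsMoorePenroseInverse (U * diagonal d * Uᵀ) (U * diagonal d⁻¹ * Uᵀ) := by
  have conj_mul : ∀ e f : n → R,
      U * diagonal e * Uᵀ * (U * diagonal f * Uᵀ) = U * diagonal (e * f) * Uᵀ := by
    intro e f
    calc U * diagonal e * Uᵀ * (U * diagonal f * Uᵀ)
        = U * diagonal e * (Uᵀ * U) * diagonal f * Uᵀ := by simp only [Matrix.mul_assoc]
      _ = U * diagonal (e * f) * Uᵀ := by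
        rw [hU, Matrix.mul_one, Matrix.mul_assoc U, diagonal_mul_diagonal]
        rfl
  have conj_transpose : ∀ e : n → R, (U * diagonal e * Uᵀ)ᵀ = U * diagonal e * Uᵀ := by
    intro e
    rw [transpose_mul, transpose_mul, transpose_transpose, diagonal_transpose, Matrix.mul_assoc]
  have hd : d * d⁻¹ * d = d := funext fun i => mul_inv_mul_cancel (d i)
  have hd' : d⁻¹ * d * d⁻¹ = d⁻¹ := funext fun i => by simpa using mul_inv_mul_cancel (d i)⁻¹
  refine ⟨?_, ?_, ?_, ?_⟩ <;> simp only [conj_mul, conj_transpose, hd, hd']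

theorem exists_isMoorePenroseInverse_of_transpose_eq [DecidableEq n] {M : Matrix n n ℝ}
    (hM : Mᵀ = M) : ∃ X, IsMoorePenroseInverse M X := by
  have hH : M.IsHermitian := by rwa [Matrix.IsHermitian, conjTranspose_eq_transpose_of_trivial]
  set U : Matrix n n ℝ := (hH.eigenvectorUnitary : Matrix n n ℝ)
  have hU : Uᵀ * U = 1 := by
    simpa [U, star_eq_conjTranspose] using (mem_unitaryGroup_iff').mp hH.eigenvectorUnitary.2
  have hspec : M = U * diagonal hH.eigenvalues * Uᵀ := by
    simpa [U, star_eq_conjTranspose] using hH.spectral_theorem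
  rw [hspec]
  exact ⟨_, isMoorePenroseInverse_conj_diagonal hU hH.eigenvalues⟩

end MoorePenrose

theorem isMoorePenroseInverse_mpinv {a : ℕ} {M : Matrix (Fin a) (Fin a) ℝ} (hM : Mᵀ = M) :
    IsMoorePenroseInverse M (mpinv M) :=
  Classical.epsilon_spec (exists_isMoorePenroseInverse_of_transpose_eq hM)

section RowProjection

variable {n p : ℕ}

/-- The orthogonal projection onto `rowSpace M`. -/
def rowProj (M : Matrix (Fin p) (Fin n) ℝ) : Matrix (Fin n) (Fin n) ℝ :=
  Mᵀ * mpinv (M * Mᵀ) * M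

variable (M : Matrix (Fin p) (Fin n) ℝ)

theorem gram_mul_mpinv_transpose :
    (M * Mᵀ * mpinv (M * Mᵀ))ᵀ = M * Mᵀ * mpinv (M * Mᵀ) :=
  (isMoorePenroseInverse_mpinv (by rw [transpose_mul, transpose_transpose])).2.2.1

/-- With `G = M Mᵀ` and `X = G†`, `Z = (G X - 1) M` has `Z Zᵀ = (G X G - G) (G X - 1) = 0`. -/
theorem gram_mul_mpinv_mul_self : M * Mᵀ * mpinv (M * Mᵀ) * M = M := by
  have hGXG : M * Mᵀ * mpinv (M * Mᵀ) * (M * Mᵀ) = M * Mᵀ :=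
    (isMoorePenroseInverse_mpinv (by rw [transpose_mul, transpose_transpose])).1
  have hGX := gram_mul_mpinv_transpose M
  generalize mpinv (M * Mᵀ) = X at hGXG hGX ⊢
  have hZ : ((M * Mᵀ * X - 1) * M) * ((M * Mᵀ * X - 1) * M)ᵀ = 0 := by
    rw [transpose_mul, transpose_sub, hGX, transpose_one]
    calc (M * Mᵀ * X - 1) * M * (Mᵀ * (M * Mᵀ * X - 1))
        = (M * Mᵀ * X * (M * Mᵀ) - M * Mᵀ) * (M * Mᵀ * X - 1) := by
          simp only [Matrix.sub_mul, Matrix.one_mul, Matrix.mul_assoc]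
      _ = 0 := by rw [hGXG, sub_self, Matrix.zero_mul]
  have hZ0 : (M * Mᵀ * X - 1) * M = 0 :=
    self_mul_conjTranspose_eq_zero.mp (by rwa [conjTranspose_eq_transpose_of_trivial])
  rwa [Matrix.sub_mul, Matrix.one_mul, sub_eq_zero] at hZ0

theorem mul_rowProj : M * rowProj M = M := by
  rw [rowProj, ← Matrix.mul_assoc, ← Matrix.mul_assoc, gram_mul_mpinv_mul_self]

/-- Only the symmetry of `G G†` is available (`G = M Mᵀ`), so `M = G G† M` is used to move
`(G†)ᵀ` next to `G`. -/
theorem rowProj_transpose : (rowProj M)ᵀ = rowProj M := by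
  rw [rowProj]
  have hM := gram_mul_mpinv_mul_self M
  have hGX := gram_mul_mpinv_transpose M
  have hMt : Mᵀ * (M * Mᵀ * mpinv (M * Mᵀ)) = Mᵀ := by
    conv_rhs => rw [← hM]
    rw [transpose_mul, hGX]
  generalize mpinv (M * Mᵀ) = X at hM hGX hMt ⊢
  rw [transpose_mul (M * Mᵀ) X, transpose_mul M Mᵀ, transpose_transpose] at hGX
  calc (Mᵀ * X * M)ᵀ = Mᵀ * Xᵀ * (M * Mᵀ * X * M) := by
        rw [hM, transpose_mul, transpose_mul, transpose_transpose, Matrix.mul_assoc]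
    _ = Mᵀ * (Xᵀ * (M * Mᵀ)) * X * M := by simp only [Matrix.mul_assoc]
    _ = Mᵀ * X * M := by rw [hGX, hMt]

theorem rowProj_mul_self : rowProj M * rowProj M = rowProj M := by
  nth_rw 1 [rowProj]
  rw [Matrix.mul_assoc _ M, mul_rowProj, rowProj]

theorem rowProj_mulVec_mem_rowSpace (v : Fin n → ℝ) : rowProj M *ᵥ v ∈ rowSpace M :=
  mem_rowSpace_iff.mpr ⟨mpinv (M * Mᵀ) *ᵥ (M *ᵥ v), by
    rw [rowProj, ← mulVec_mulVec, ← mulVec_mulVec, mulVec_transpose]⟩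

theorem rowProj_mulVec_eq_zero_iff {v : Fin n → ℝ} : rowProj M *ᵥ v = 0 ↔ M *ᵥ v = 0 := by
  refine ⟨fun h => ?_, fun h => ?_⟩
  · rw [← mul_rowProj M, ← mulVec_mulVec, h, mulVec_zero]
  · rw [rowProj, ← mulVec_mulVec, h, mulVec_zero]

theorem dotProduct_self_sub_rowProj (v : Fin n → ℝ) :
    (v - rowProj M *ᵥ v) ⬝ᵥ (v - rowProj M *ᵥ v) =
      v ⬝ᵥ v - (rowProj M *ᵥ v) ⬝ᵥ (rowProj M *ᵥ v) := by
  have h : (rowProj M *ᵥ v) ⬝ᵥ (rowProj M *ᵥ v) = v ⬝ᵥ (rowProj M *ᵥ v) := by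
    rw [dotProduct_mulVec, ← mulVec_transpose, rowProj_transpose, mulVec_mulVec,
      rowProj_mul_self, dotProduct_comm]
  rw [sub_dotProduct, dotProduct_sub, dotProduct_sub, h, dotProduct_comm (rowProj M *ᵥ v) v]
  ring

end RowProjection

def IsProjectionIteration {n p : ℕ} (M : ℕ → Matrix (Fin p) (Fin n) ℝ)
    (y : ℕ → Fin n → ℝ) : Prop :=
  ∀ k, y (k + 1) = y k - rowProj (M (k + 1)) *ᵥ y k

namespace IsProjectionIteration

variable {n p : ℕ} {M : ℕ → Matrix (Fin p) (Fin n) ℝ} {y : ℕ → Fin n → ℝ}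

theorem antitone_dotProduct_self (h : IsProjectionIteration M y) :
    Antitone fun k => y k ⬝ᵥ y k :=
  antitone_nat_of_succ_le fun k => by
    rw [h k, dotProduct_self_sub_rowProj]
    exact sub_le_self _ (dotProduct_self_nonneg _)

theorem mem_of_rowSpace_le (h : IsProjectionIteration M y) {V : Submodule ℝ (Fin n → ℝ)}
    (h0 : y 0 ∈ V) (hV : ∀ k, rowSpace (M k) ≤ V) (k : ℕ) : y k ∈ V := by
  induction k with
  | zero => exact h0
  | succ k ih =>
    rw [h k]
    exact V.sub_mem ih (hV _ (rowProj_mulVec_mem_rowSpace _ _))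

theorem eq_of_dotProduct_self_le (h : IsProjectionIteration M y) {j k : ℕ}
    (hjk : y j ⬝ᵥ y j ≤ y k ⬝ᵥ y k) {i : ℕ} (hji : j ≤ i) (hik : i ≤ k) : y i = y j := by
  induction i, hji using Nat.le_induction with
  | base => rfl
  | succ i hji ih =>
    have hyi := ih (by omega)
    have hloss := dotProduct_self_sub_rowProj (M (i + 1)) (y j)
    rw [← hyi, ← h i, hyi] at hloss
    have hP : rowProj (M (i + 1)) *ᵥ y j = 0 := by
      refine dotProduct_self_eq_zero.mp (le_antisymm ?_ (dotProduct_self_nonneg _))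
      linarith [h.antitone_dotProduct_self hik]
    rw [h i, hyi, hP, sub_zero]

theorem dotProduct_self_lt (h : IsProjectionIteration M y) {j k : ℕ} (hj : y j ≠ 0)
    (hmem : y j ∈ ⨆ i ∈ Icc (j + 1) k, rowSpace (M i)) : y k ⬝ᵥ y k < y j ⬝ᵥ y j := by
  by_contra! hle
  have hker : ∀ i ∈ Icc (j + 1) k, M i *ᵥ y j = 0 := by
    intro i hi
    obtain ⟨hji, hik⟩ := mem_Icc.mp hi
    obtain ⟨i, rfl⟩ : ∃ i', i = i' + 1 := ⟨i - 1, by omega⟩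
    have hstep := h i
    rw [h.eq_of_dotProduct_self_le hle (by omega) hik,
      h.eq_of_dotProduct_self_le hle (i := i) (by omega) (by omega), eq_comm, sub_eq_self,
      rowProj_mulVec_eq_zero_iff] at hstep
    exact hstep
  have horth : (⨆ i ∈ Icc (j + 1) k, rowSpace (M i)) ≤
      LinearMap.ker ((dotProductBilin ℝ ℝ).flip (y j)) :=
    iSup₂_le fun i hi _ hv => dotProduct_eq_zero_of_mem_rowSpace hv (hker i hi)
  exact hj (dotProduct_self_eq_zero.mp (horth hmem))

theorem nrm2_lt_or_eq_zero (h : IsProjectionIteration M y) {j k : ℕ} (hjk : j ≤ k)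
    (hmem : y j ∈ ⨆ i ∈ Icc (j + 1) k, rowSpace (M i)) :
    nrm2 (y k) < nrm2 (y j) ∨ y k = 0 := by
  by_cases hj : y j = 0
  · have hle := h.antitone_dotProduct_self hjk
    simp only [hj, zero_dotProduct] at hle
    exact Or.inr (dotProduct_self_eq_zero.mp (le_antisymm hle (dotProduct_self_nonneg _)))
  · rw [nrm2_eq_sqrt_dotProduct, nrm2_eq_sqrt_dotProduct]
    exact Or.inl (Real.sqrt_lt_sqrt (dotProduct_self_nonneg _) (h.dotProduct_self_lt hj hmem))

end IsProjectionIteration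

/-- Take `γ ℓ = max (a ℓ / a (ℓ - 1)) (1 / 2)`; when `a (ℓ - 1) = 0` the junk value `a ℓ / 0 = 0`
is harmless since then `a ℓ = 0` too. -/
theorem exists_contraction_factors {a : ℕ → ℝ} (ha : ∀ ℓ, 0 ≤ a ℓ) {L : ℕ}
    (hstep : ∀ ℓ < L, a (ℓ + 1) < a ℓ ∨ a (ℓ + 1) = 0) :
    ∃ γ : ℕ → ℝ, (∀ ℓ ∈ Icc 1 L, γ ℓ ∈ Set.Ioo (0 : ℝ) 1) ∧
      a L ≤ (∏ ℓ ∈ Icc 1 L, γ ℓ) * a 0 := by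
  set γ : ℕ → ℝ := fun ℓ => max (a ℓ / a (ℓ - 1)) (1 / 2)
  have hγpos : ∀ ℓ, 0 < γ ℓ := fun ℓ => lt_max_of_lt_right (by norm_num)
  have hγ : ∀ ℓ < L, γ (ℓ + 1) < 1 ∧ a (ℓ + 1) ≤ γ (ℓ + 1) * a ℓ := by
    intro ℓ hℓ
    simp only [γ, Nat.add_sub_cancel]
    rcases hstep ℓ hℓ with hlt | hzero
    · have hpos : 0 < a ℓ := (ha _).trans_lt hlt
      refine ⟨max_lt ((div_lt_one hpos).mpr hlt) (by norm_num), ?_⟩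
      calc a (ℓ + 1) = a (ℓ + 1) / a ℓ * a ℓ := (div_mul_cancel₀ _ hpos.ne').symm
        _ ≤ _ := mul_le_mul_of_nonneg_right (le_max_left _ _) hpos.le
    · rw [hzero, zero_div]
      exact ⟨max_lt (by norm_num) (by norm_num), mul_nonneg (by norm_num) (ha ℓ)⟩
  refine ⟨γ, fun ℓ hℓ => ?_, ?_⟩
  · obtain ⟨h1, hL⟩ := mem_Icc.mp hℓ
    obtain ⟨ℓ, rfl⟩ : ∃ ℓ', ℓ = ℓ' + 1 := ⟨ℓ - 1, by omega⟩
    exact ⟨hγpos _, (hγ ℓ (by omega)).1⟩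
  · suffices ∀ l ≤ L, a l ≤ (∏ ℓ ∈ Icc 1 l, γ ℓ) * a 0 from this L le_rfl
    intro l hl
    induction l with
    | zero => simp
    | succ l ih =>
      rw [prod_Icc_succ_top (by omega), mul_comm _ (γ (l + 1)), mul_assoc]
      exact (hγ l (by omega)).2.trans
        (mul_le_mul_of_nonneg_left (ih (by omega)) (hγpos _).le)

theorem mulVec_spStep_sub {m n p : ℕ} (A : Matrix (Fin m) (Fin n) ℝ) (b : Fin m → ℝ)
    {Bhalf : Matrix (Fin n) (Fin n) ℝ} (hBh : IsUnit Bhalf.det) (hBsymm : Bhalfᵀ = Bhalf)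
    (S : Matrix (Fin m) (Fin p) ℝ) (x : Fin n → ℝ) {xstar : Fin n → ℝ}
    (hsol : A *ᵥ xstar = b) :
    Bhalf *ᵥ (spStep A (Bhalf * Bhalf) b S x - xstar) =
      Bhalf *ᵥ (x - xstar) - rowProj (Sᵀ * A * Bhalf⁻¹) *ᵥ (Bhalf *ᵥ (x - xstar)) := by
  have hinvT : Bhalf⁻¹ᵀ = Bhalf⁻¹ := by rw [transpose_nonsing_inv, hBsymm]
  have hconj : Bhalf * (Bhalf * Bhalf)⁻¹ * Aᵀ * S *
      mpinv (Sᵀ * A * (Bhalf * Bhalf)⁻¹ * Aᵀ * S) * Sᵀ * A =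
        rowProj (Sᵀ * A * Bhalf⁻¹) * Bhalf := by
    rw [rowProj, transpose_mul, transpose_mul, hinvT, Matrix.mul_inv_rev]
    simp only [← Matrix.mul_assoc]
    rw [mul_nonsing_inv _ hBh, Matrix.one_mul]
    simp only [Matrix.mul_assoc, nonsing_inv_mul _ hBh, Matrix.mul_one, transpose_transpose]
  rw [spStep, ← hsol, ← mulVec_sub, sub_right_comm, mulVec_sub, mulVec_mulVec, mulVec_mulVec]
  simp only [← Matrix.mul_assoc]
  rw [hconj, ← mulVec_mulVec]

theorem mulVec_sub_mem_rowSpace_of_forall_nrm2_le {m n : ℕ} {A : Matrix (Fin m) (Fin n) ℝ}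
    {b : Fin m → ℝ} {Bhalf : Matrix (Fin n) (Fin n) ℝ} (hBh : IsUnit Bhalf.det)
    {x₀ xstar : Fin n → ℝ} (hsol : A *ᵥ xstar = b)
    (hproj : ∀ y, A *ᵥ y = b → nrm2 (Bhalf *ᵥ (x₀ - xstar)) ≤ nrm2 (Bhalf *ᵥ (x₀ - y))) :
    Bhalf *ᵥ (x₀ - xstar) ∈ rowSpace (A * Bhalf⁻¹) := by
  refine mem_rowSpace_of_forall_dotProduct_eq_zero fun w hw =>
    dotProduct_eq_zero_of_forall_dotProduct_self_le fun t => ?_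
  have hsolt : A *ᵥ (xstar + t • (Bhalf⁻¹ *ᵥ w)) = b := by
    rw [mulVec_add, mulVec_smul, mulVec_mulVec, hw, smul_zero, add_zero, hsol]
  have hshift : Bhalf *ᵥ (x₀ - (xstar + t • (Bhalf⁻¹ *ᵥ w))) =
      Bhalf *ᵥ (x₀ - xstar) - t • w := by
    rw [← sub_sub, mulVec_sub, mulVec_smul, mulVec_mulVec, mul_nonsing_inv _ hBh, one_mulVec]
  have hle := hproj _ hsolt
  rwa [hshift, nrm2_eq_sqrt_dotProduct, nrm2_eq_sqrt_dotProduct,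
    Real.sqrt_le_sqrt_iff (dotProduct_self_nonneg _)] at hle

theorem stmt4_general {m n p : ℕ} (A : Matrix (Fin m) (Fin n) ℝ) (b : Fin m → ℝ)
    (B Bhalf : Matrix (Fin n) (Fin n) ℝ) (hB : B.PosDef)
    (hBsymm : Bhalfᵀ = Bhalf) (hBsq : Bhalf * Bhalf = B)
    (S : ℕ → Matrix (Fin m) (Fin p) ℝ)
    (x₀ : Fin n → ℝ) (x : ℕ → Fin n → ℝ)
    (hx0 : x 0 = x₀) (hxrec : ∀ k, x (k + 1) = spStep A B b (S (k + 1)) (x k))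
    (xstar : Fin n → ℝ) (hsol : A *ᵥ xstar = b)
    (hproj : ∀ y, A *ᵥ y = b →
      nrm2 (Bhalf *ᵥ (x₀ - xstar)) ≤ nrm2 (Bhalf *ᵥ (x₀ - y)))
    -- `Q k` has orthonormal columns forming a basis of `row(S_kᵀ A B^{-1/2})`
    (q : ℕ → ℕ) (Q : ∀ k, Matrix (Fin n) (Fin (q k)) ℝ)
    (hQspan : ∀ k, colSpace (Q k) = rowSpace ((S k)ᵀ * A * Bhalf⁻¹))
    -- `τ 0 = 0` and, for `ℓ < L`, `τ (ℓ+1)` is the smallest `k > τ ℓ` with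
    -- `col(Q_{τ_ℓ+1}) + ⋯ + col(Q_k) = row(AB^{-1/2})` (all finite on the event considered)
    (L : ℕ) (τ : ℕ → ℕ) (hτ0 : τ 0 = 0)
    (hτmono : ∀ ℓ < L, τ ℓ < τ (ℓ + 1))
    (hτ : ∀ ℓ < L, (⨆ i ∈ Finset.Icc (τ ℓ + 1) (τ (ℓ + 1)), colSpace (Q i)) =
      rowSpace (A * Bhalf⁻¹)) :
    ∃ γ : ℕ → ℝ, (∀ ℓ ∈ Finset.Icc 1 L, γ ℓ ∈ Set.Ioo (0 : ℝ) 1) ∧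
      nrm2 (Bhalf *ᵥ (x (τ L) - xstar)) ≤
        (∏ ℓ ∈ Finset.Icc 1 L, γ ℓ) * nrm2 (Bhalf *ᵥ (x₀ - xstar)) := by
  have hBh : IsUnit Bhalf.det := isUnit_of_mul_isUnit_left (y := Bhalf.det) <| by
    rw [← det_mul, hBsq]
    exact (isUnit_iff_isUnit_det B).mp hB.isUnit
  subst hBsq hx0
  set y : ℕ → Fin n → ℝ := fun k => Bhalf *ᵥ (x k - xstar)
  have hiter : IsProjectionIteration (fun k => (S k)ᵀ * A * Bhalf⁻¹) y := fun k => by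
    simp only [y, hxrec k, mulVec_spStep_sub A b hBh hBsymm _ _ hsol]
  have hrow : ∀ k, y k ∈ rowSpace (A * Bhalf⁻¹) :=
    hiter.mem_of_rowSpace_le (mulVec_sub_mem_rowSpace_of_forall_nrm2_le hBh hsol hproj)
      fun k => by rw [Matrix.mul_assoc]; exact rowSpace_mul_le _ _
  have hcycle : ∀ ℓ < L, nrm2 (y (τ (ℓ + 1))) < nrm2 (y (τ ℓ)) ∨ y (τ (ℓ + 1)) = 0 := by
    intro ℓ hℓ
    refine hiter.nrm2_lt_or_eq_zero (hτmono ℓ hℓ).le ?_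
    simpa only [← hτ ℓ hℓ, hQspan] using hrow (τ ℓ)
  obtain ⟨γ, hγ, hbound⟩ := exists_contraction_factors (a := fun ℓ => nrm2 (y (τ ℓ)))
    (fun ℓ => Real.sqrt_nonneg _) fun ℓ hℓ =>
      (hcycle ℓ hℓ).imp_right fun h => by simp [h, nrm2]
  exact ⟨γ, hγ, by simpa only [hτ0] using hbound⟩

/-- On the event `∩_{ℓ=1}^L {τ_ℓ < ∞}` (here: for any realization for which
the first `L` covering times are finite numbers), there exist `γ_ℓ ∈ (0,1)`, `ℓ = 1,…,L`,
such that `‖x_{τ_L} − x*‖_B ≤ (∏_{ℓ=1}^L γ_ℓ) ‖x₀ − x*‖_B`. -/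
theorem stmt4 {m n p : ℕ} (A : Matrix (Fin m) (Fin n) ℝ) (b : Fin m → ℝ)
    (hconsistent : ∃ y, A *ᵥ y = b)
    (B Bhalf : Matrix (Fin n) (Fin n) ℝ) (hB : B.PosDef)
    (hBsymm : Bhalfᵀ = Bhalf) (hBsq : Bhalf * Bhalf = B)
    (S : ℕ → Matrix (Fin m) (Fin p) ℝ)
    (x₀ : Fin n → ℝ) (x : ℕ → Fin n → ℝ)
    (hx0 : x 0 = x₀) (hxrec : ∀ k, x (k + 1) = spStep A B b (S (k + 1)) (x k))
    (xstar : Fin n → ℝ) (hsol : A *ᵥ xstar = b)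
    (hproj : ∀ y, A *ᵥ y = b →
      nrm2 (Bhalf *ᵥ (x₀ - xstar)) ≤ nrm2 (Bhalf *ᵥ (x₀ - y)))
    -- `Q k` has orthonormal columns forming a basis of `row(S_kᵀ A B^{-1/2})`
    (q : ℕ → ℕ) (Q : ∀ k, Matrix (Fin n) (Fin (q k)) ℝ)
    (hQorth : ∀ k, (Q k)ᵀ * Q k = 1)
    (hQspan : ∀ k, colSpace (Q k) = rowSpace ((S k)ᵀ * A * Bhalf⁻¹))
    -- `τ 0 = 0` and, for `ℓ < L`, `τ (ℓ+1)` is the smallest `k > τ ℓ` with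
    -- `col(Q_{τ_ℓ+1}) + ⋯ + col(Q_k) = row(AB^{-1/2})` (all finite on the event considered)
    (L : ℕ) (τ : ℕ → ℕ) (hτ0 : τ 0 = 0)
    (hτmono : ∀ ℓ < L, τ ℓ < τ (ℓ + 1))
    (hτ : ∀ ℓ < L, (⨆ i ∈ Finset.Icc (τ ℓ + 1) (τ (ℓ + 1)), colSpace (Q i)) =
      rowSpace (A * Bhalf⁻¹))
    (hτmin : ∀ ℓ < L, ∀ k, τ ℓ < k → k < τ (ℓ + 1) →
      (⨆ i ∈ Finset.Icc (τ ℓ + 1) k, colSpace (Q i)) ≠ rowSpace (A * Bhalf⁻¹)) :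
    ∃ γ : ℕ → ℝ, (∀ ℓ ∈ Finset.Icc 1 L, γ ℓ ∈ Set.Ioo (0 : ℝ) 1) ∧
      nrm2 (Bhalf *ᵥ (x (τ L) - xstar)) ≤
        (∏ ℓ ∈ Finset.Icc 1 L, γ ℓ) * nrm2 (Bhalf *ᵥ (x₀ - xstar)) :=
  stmt4_general A b B Bhalf hB hBsymm hBsq S x₀ x hx0 hxrec xstar hsol hproj q Q hQspan L τ hτ0
    hτmono hτ

end
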